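/- arXiv:1603.03765 — 3 statements merged into one kernel-verified Lean document; each statement's English description precedes it below -/
import Mathlib

section
/- For every even positive integer p and every n ≥ 2, L_{p^n} = 2 + (L_{p^2} - 2) · ∏_{j=1}^{n-2} [∑_{k=1}^{p/2} L_{(2k-1)·p^{j+1}/2}]^2. -/
/-- The Lucas numbers: L 0 = 2, L 1 = 1, L (n+2) = L n + L (n+1). -/
def lucas : ℕ → ℕ
  | 0 => 2
  | 1 => 1
  | n + 2 => lucas n + lucas (n + 1)

open Finset

lemma fibZ (n : ℕ) : (Nat.fib (n+2) : ℤ) = Nat.fib (n+1) + Nat.fib n := by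
  rw [Nat.fib_add_two]; push_cast; ring

lemma luc_fib (n : ℕ) : (lucas n : ℤ) = 2 * Nat.fib (n+1) - Nat.fib n := by
  induction n using Nat.twoStepInduction with
  | zero => simp [lucas]
  | one => simp [lucas, Nat.fib]
  | more n ih1 ih2 =>
    have h1 : (Nat.fib (n+3) : ℤ) = Nat.fib (n+2) + Nat.fib (n+1) := by
      exact fibZ _
    have h2 : (Nat.fib (n+2) : ℤ) = Nat.fib (n+1) + Nat.fib n := by
      exact fibZ _
    have h3 : (lucas (n+2) : ℤ) = lucas n + lucas (n+1) := by
      show ((lucas n + lucas (n+1) : ℕ) : ℤ) = _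
      push_cast; ring
    rw [h3, ih1, ih2, show n+2+1 = n+3 from rfl, h1, h2]
    ring

lemma docagne (n u : ℕ) :
    (Nat.fib (n+1) : ℤ) * Nat.fib (u+n) - Nat.fib n * Nat.fib (u+n+1)
      = (-1)^n * Nat.fib u := by
  induction n with
  | zero => simp
  | succ n ih =>
    have h1 : (Nat.fib (n+2) : ℤ) = Nat.fib (n+1) + Nat.fib n := by
      exact fibZ _
    have h2 : (Nat.fib (u+n+2) : ℤ) = Nat.fib (u+n+1) + Nat.fib (u+n) := by
      exact fibZ _
    rw [show u+(n+1) = u+n+1 from rfl, show u+n+1+1 = u+n+2 from rfl, h1, h2]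
    linear_combination -ih

lemma fib_two_mul_add (u n : ℕ) :
    (Nat.fib (u + 2*n) : ℤ) = Nat.fib n * lucas (u+n) + (-1)^n * Nat.fib u := by
  cases n with
  | zero => simp
  | succ m =>
    have hadd : (Nat.fib (u + 2*(m+1)) : ℤ)
        = Nat.fib (u+m) * Nat.fib (m+1) + Nat.fib (u+m+1) * Nat.fib (m+2) := by
      have := Nat.fib_add (u+m) (m+1)
      rw [show u+m+(m+1)+1 = u + 2*(m+1) by ring] at this
      exact_mod_cast this
    have h2 : (lucas (u+(m+1)) : ℤ) = 2 * Nat.fib (u+m+2) - Nat.fib (u+m+1) := by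
      rw [show u+(m+1) = u+m+1 from rfl, luc_fib]
    have h3 : (Nat.fib (u+m+2) : ℤ) = Nat.fib (u+m+1) + Nat.fib (u+m) := by
      exact fibZ _
    have h4 : (Nat.fib (m+2) : ℤ) = Nat.fib (m+1) + Nat.fib m := by
      exact fibZ _
    have h5 := docagne m u
    rw [hadd, h2, h3, h4]
    linear_combination -h5

lemma cassini (m : ℕ) :
    (Nat.fib (m+1) : ℤ)^2 - Nat.fib (m+1) * Nat.fib m - (Nat.fib m)^2 = (-1)^m := by
  have h := docagne m 1
  have h4 : (Nat.fib (m+2) : ℤ) = Nat.fib (m+1) + Nat.fib m := by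
    exact fibZ _
  rw [show (1:ℕ)+m = m+1 by ring, show m+1+1 = m+2 from rfl, h4] at h
  simpa using by linear_combination h

lemma lucas_two_mul (m : ℕ) :
    (lucas (2*m) : ℤ) = 5 * (Nat.fib m)^2 + 2 * (-1)^m := by
  have h1 : (Nat.fib (2*m+1) : ℤ) = Nat.fib m * Nat.fib m + Nat.fib (m+1) * Nat.fib (m+1) := by
    have := Nat.fib_add m m
    rw [show m+m+1 = 2*m+1 by ring] at this
    exact_mod_cast this
  have h2 : (Nat.fib (2*m) : ℤ) = Nat.fib m * lucas m := by
    have := fib_two_mul_add 0 m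
    simpa using this
  have h3 := cassini m
  rw [luc_fib, h1, h2, luc_fib m]
  linear_combination 2 * h3

lemma lucas_two_mul_even (m : ℕ) (hm : Even m) :
    (lucas (2*m) : ℤ) - 2 = 5 * (Nat.fib m)^2 := by
  rw [lucas_two_mul, hm.neg_one_pow]; ring

lemma fib_sum (m : ℕ) (hm : Even m) (q : ℕ) :
    (Nat.fib (2*q*m) : ℤ) = Nat.fib m * ∑ k ∈ Icc 1 q, (lucas ((2*k-1)*m) : ℤ) := by
  induction q with
  | zero => simp
  | succ q ih =>
    have key := fib_two_mul_add (2*q*m) m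
    rw [hm.neg_one_pow] at key
    have hidx : 2*(q+1)*m = 2*q*m + 2*m := by ring
    have hidx2 : (2*(q+1)-1)*m = 2*q*m + m := by
      have : 2*(q+1)-1 = 2*q+1 := by omega
      rw [this]; ring
    rw [hidx, key, Finset.sum_Icc_succ_top (by omega : 1 ≤ q+1), hidx2, ih]
    ring

lemma step_lemma (p : ℕ) (hp : Even p) (hp' : 0 < p) (j : ℕ) (hj : 1 ≤ j) :
    (lucas (p^(j+2)) : ℤ) - 2 =
      ((lucas (p^(j+1)) : ℤ) - 2) *
        (∑ k ∈ Icc 1 (p / 2), (lucas ((2 * k - 1) * p ^ (j + 1) / 2) : ℤ))^2 := by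
  obtain ⟨q, hq⟩ := hp
  have hq1 : 1 ≤ q := by omega
  set m := q * p^j with hm
  have hpj : Even (p^j) := by
    obtain ⟨i, rfl⟩ : ∃ i, j = i + 1 := ⟨j - 1, by omega⟩
    rw [pow_succ]
    exact (Even.mul_left ⟨q, hq⟩ _)
  have hme : Even m := hpj.mul_left q
  have h2m : p^(j+1) = 2*m := by
    rw [hm, pow_succ, hq]; ring
  have h4m : p^(j+2) = 2*(2*q*m) := by
    rw [show j+2 = (j+1)+1 from rfl, pow_succ, h2m, hm, hq]; ring
  have hdiv : p / 2 = q := by omega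
  have hsum : ∀ k, (2 * k - 1) * p ^ (j + 1) / 2 = (2*k-1)*m := by
    intro k
    rw [h2m, show (2*k-1)*(2*m) = ((2*k-1)*m)*2 by ring]
    exact Nat.mul_div_cancel _ two_pos
  have hS : ∑ k ∈ Icc 1 (p / 2), (lucas ((2 * k - 1) * p ^ (j + 1) / 2) : ℤ)
      = ∑ k ∈ Icc 1 q, (lucas ((2*k-1)*m) : ℤ) := by
    rw [hdiv]
    exact Finset.sum_congr rfl (fun k _ => by rw [hsum k])
  have hfib := fib_sum m hme q
  have hL1 : (lucas (p^(j+1)) : ℤ) - 2 = 5 * (Nat.fib m)^2 := by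
    rw [h2m]; exact lucas_two_mul_even m hme
  have hL2 : (lucas (p^(j+2)) : ℤ) - 2 = 5 * (Nat.fib (2*q*m))^2 := by
    rw [h4m]
    exact lucas_two_mul_even _ ⟨q*m, by ring⟩
  rw [hL2, hL1, hS, hfib]
  ring

lemma aux_lemma (p : ℕ) (hp : Even p) (hp' : 0 < p) (M : ℕ) :
    (lucas (p^(M+2)) : ℤ) - 2 =
      ((lucas (p^2) : ℤ) - 2) *
        ∏ j ∈ Icc 1 M,
          (∑ k ∈ Icc 1 (p / 2), (lucas ((2 * k - 1) * p ^ (j + 1) / 2) : ℤ)) ^ 2 := by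
  induction M with
  | zero => simp
  | succ M ih =>
    rw [Finset.prod_Icc_succ_top (by omega : 1 ≤ M+1)]
    have hstep := step_lemma p hp hp' (M+1) (by omega)
    rw [show M+1+2 = M+3 from rfl] at hstep
    rw [show M+1+2 = M+3 from rfl]
    rw [hstep, ih]
    ring

theorem stmt10 (p n : ℕ) (hp : Even p) (hp' : 0 < p) (hn : 2 ≤ n) :
    (lucas (p ^ n) : ℤ) =
      2 + ((lucas (p ^ 2) : ℤ) - 2) *
        ∏ j ∈ Finset.Icc 1 (n - 2),
          (∑ k ∈ Finset.Icc 1 (p / 2), (lucas ((2 * k - 1) * p ^ (j + 1) / 2) : ℤ)) ^ 2 := by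
  obtain ⟨M, rfl⟩ : ∃ M, n = M + 2 := ⟨n - 2, by omega⟩
  have h := aux_lemma p hp hp' M
  rw [show M+2-2 = M by omega]
  linarith [h]
end

section
/- For every positive integer m and every integer a > 0, the series ∑_{n=0}^∞ (L_{2^{n+1}·m}^a − 1)/F_{2^{n+2}·m}^a converges with sum 1/(F_m^a · L_m^a). -/
lemma lucas_add_fib : ∀ n, lucas n + Nat.fib n = 2 * Nat.fib (n + 1)
  | 0 => rfl
  | 1 => rfl
  | n + 2 => by
    have h1 := lucas_add_fib n
    have h2 := lucas_add_fib (n + 1)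
    rw [lucas, Nat.fib_add_two, Nat.fib_add_two (n := n + 1)]
    omega

lemma one_le_lucas : ∀ n, 1 ≤ lucas n
  | 0 => by decide
  | 1 => by decide
  | n + 2 => by
    have := one_le_lucas n
    rw [lucas]; omega

lemma fib_mul_lucas (n : ℕ) : Nat.fib n * lucas n = Nat.fib (2 * n) := by
  rw [Nat.fib_two_mul]
  have h := lucas_add_fib n
  have hf : Nat.fib n ≤ 2 * Nat.fib (n + 1) := by omega
  have : 2 * Nat.fib (n + 1) - Nat.fib n = lucas n := by omega
  rw [this]

theorem stmt12 (m a : ℕ) (hm : 0 < m) (ha : 0 < a) :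
    HasSum
      (fun n : ℕ =>
        ((lucas (2 ^ (n + 1) * m) : ℝ) ^ a - 1) / (Nat.fib (2 ^ (n + 2) * m) : ℝ) ^ a)
      (1 / ((Nat.fib m : ℝ) ^ a * (lucas m : ℝ) ^ a)) := by
  set f : ℕ → ℝ := fun n =>
    ((lucas (2 ^ (n + 1) * m) : ℝ) ^ a - 1) / (Nat.fib (2 ^ (n + 2) * m) : ℝ) ^ a with hf
  set g : ℕ → ℝ := fun n => 1 / (Nat.fib (2 ^ (n + 1) * m) : ℝ) ^ a with hg
  have fibpos : ∀ n : ℕ, (0 : ℝ) < (Nat.fib (2 ^ (n + 1) * m) : ℝ) ^ a := by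
    intro n
    have : 0 < Nat.fib (2 ^ (n + 1) * m) :=
      Nat.fib_pos.2 (by positivity)
    positivity
  have lucpos : ∀ n : ℕ, (1 : ℝ) ≤ (lucas (2 ^ (n + 1) * m) : ℝ) ^ a := by
    intro n
    exact one_le_pow₀ (by exact_mod_cast one_le_lucas _)
  have hsplit : ∀ n, f n = g n - g (n + 1) := by
    intro n
    have hkey : (Nat.fib (2 ^ (n + 2) * m) : ℝ) =
        (Nat.fib (2 ^ (n + 1) * m) : ℝ) * (lucas (2 ^ (n + 1) * m) : ℝ) := by
      have : 2 ^ (n + 2) * m = 2 * (2 ^ (n + 1) * m) := by ring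
      rw [this, ← fib_mul_lucas]
      push_cast; ring
    have hF := fibpos n
    have hL : (0:ℝ) < (lucas (2 ^ (n + 1) * m) : ℝ) ^ a :=
      lt_of_lt_of_le one_pos (lucpos n)
    simp only [hf, hg, hkey]
    rw [mul_pow]
    field_simp
  -- nonneg terms
  have hnonneg : ∀ n, 0 ≤ f n := by
    intro n
    have hD : (0:ℝ) < (Nat.fib (2 ^ (n + 2) * m) : ℝ) ^ a := by
      have : 0 < Nat.fib (2 ^ (n + 2) * m) := Nat.fib_pos.2 (by positivity)
      positivity
    exact div_nonneg (by linarith [lucpos n]) hD.le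
  -- partial sums telescope
  have hsum : ∀ N : ℕ, ∑ n ∈ Finset.range N, f n = g 0 - g N := by
    intro N
    calc ∑ n ∈ Finset.range N, f n = ∑ n ∈ Finset.range N, (g n - g (n+1)) := by
          exact Finset.sum_congr rfl fun n _ => hsplit n
      _ = g 0 - g N := by rw [Finset.sum_range_sub' g]
  -- g tends to 0
  have hfib_ge : ∀ n : ℕ, (n + 1 : ℕ) ≤ Nat.fib (2 ^ (n + 1) * m) := by
    intro n
    induction n with
    | zero => exact Nat.fib_pos.2 (by positivity)
    | succ k ih =>
      have hkey : Nat.fib (2 ^ (k + 2) * m) =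
          Nat.fib (2 ^ (k + 1) * m) * lucas (2 ^ (k + 1) * m) := by
        have : 2 ^ (k + 2) * m = 2 * (2 ^ (k + 1) * m) := by ring
        rw [this, ← fib_mul_lucas]
      have hL2 : 2 ≤ lucas (2 ^ (k + 1) * m) := by
        have h := lucas_add_fib (2 ^ (k + 1) * m)
        have hidx : 2 ≤ 2 ^ (k + 1) * m := by
          calc 2 ≤ 2 ^ (k + 1) := Nat.one_lt_two_pow (by omega)
            _ ≤ 2 ^ (k + 1) * m := Nat.le_mul_of_pos_right _ hm
        have hf1 : 1 ≤ Nat.fib (2 ^ (k + 1) * m) := Nat.fib_pos.2 (by omega)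
        have hf2 : Nat.fib (2 ^ (k + 1) * m) < Nat.fib (2 ^ (k + 1) * m + 1) := by
          apply Nat.fib_lt_fib_succ; omega
        omega
      rw [hkey]
      calc (k + 2 : ℕ) ≤ (k + 1) * 2 := by omega
        _ ≤ Nat.fib (2 ^ (k + 1) * m) * lucas (2 ^ (k + 1) * m) :=
            Nat.mul_le_mul ih hL2
  have hgto : Filter.Tendsto g Filter.atTop (nhds 0) := by
    have hb : ∀ n : ℕ, 0 ≤ g n ∧ g n ≤ 1 / (n + 1 : ℝ) := by
      intro n
      constructor
      · exact div_nonneg zero_le_one (fibpos n).le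
      · apply div_le_div_of_nonneg_left one_pos.le (by positivity)
        calc (n + 1 : ℝ) ≤ (Nat.fib (2 ^ (n + 1) * m) : ℝ) := by
              exact_mod_cast hfib_ge n
          _ ≤ (Nat.fib (2 ^ (n + 1) * m) : ℝ) ^ a := by
              apply le_self_pow₀ _ (by omega)
              exact_mod_cast Nat.fib_pos.2 (by positivity)
    apply squeeze_zero (fun n => (hb n).1) (fun n => (hb n).2)
    exact tendsto_one_div_add_atTop_nhds_zero_nat
  -- target value is g 0
  have hval : (1 : ℝ) / ((Nat.fib m : ℝ) ^ a * (lucas m : ℝ) ^ a) = g 0 := by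
    simp only [hg]
    have : 2 ^ (0 + 1) * m = 2 * m := by ring
    rw [this, ← fib_mul_lucas]
    push_cast
    rw [mul_pow]
  rw [hval]
  rw [hasSum_iff_tendsto_nat_of_nonneg hnonneg]
  simp only [hsum]
  have : Filter.Tendsto (fun N => g 0 - g N) Filter.atTop (nhds (g 0 - 0)) :=
    Filter.Tendsto.const_sub _ hgto
  simpa using this
end

section
/- For every positive integer m, the series ∑_{n=0}^∞ F_{2^{n+2}} · [(-1)^m − 1 + ∑_{k=0}^{m-1} (-1)^k · L_{(m-k)·2^{n+2}}] / F_{(2m+1)·2^{n+2}} converges with sum 1/(F_{2m+1} · L_{2m+1}). -/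
/-!
With `c = 2 ^ (n + 1)`, Binet's formulas give `F (2c) = F c * L c` and, since `c` is even,
`L c * ((-1) ^ m + ∑ k < m, (-1) ^ k L ((m - k) * 2c)) = L ((2m + 1) c)`. Hence the `n`-th term
equals `d n - d (n + 1)` for `d n = F c / F ((2m + 1) c)`. The sequence `d` is antitone, because
`d (n + 1) / d n = L c / L ((2m + 1) c)`, and tends to `0`, because `F c ^ 2 ≤ F ((2m + 1) c)`;
so the series telescopes to `d 0 = F 2 / F (2 (2m + 1)) = 1 / (F (2m + 1) L (2m + 1))`.
-/

open Filter Topology Finset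
open scoped goldenRatio

theorem hasSum_sub_succ_of_antitone {d : ℕ → ℝ} {l : ℝ} (hd : Antitone d)
    (hl : Tendsto d atTop (𝓝 l)) : HasSum (fun n => d n - d (n + 1)) (d 0 - l) := by
  rw [hasSum_iff_tendsto_nat_of_nonneg fun n => sub_nonneg.2 (hd n.le_succ)]
  simp_rw [sum_range_sub']
  exact tendsto_const_nhds.sub hl

theorem add_mul_alternating_sum_pow {R : Type*} [CommRing R] {x y : R} (h : x * y = 1) (m : ℕ) :
    (x + y) * ((-1) ^ m + ∑ k ∈ range m, (-1) ^ k * (x ^ (2 * (m - k)) + y ^ (2 * (m - k)))) =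
      x ^ (2 * m + 1) + y ^ (2 * m + 1) := by
  induction m with
  | zero => simp
  | succ m ih =>
    have hshift : ∑ k ∈ range m, (-1) ^ (k + 1) * (x ^ (2 * (m + 1 - (k + 1))) +
        y ^ (2 * (m + 1 - (k + 1)))) =
        -∑ k ∈ range m, (-1) ^ k * (x ^ (2 * (m - k)) + y ^ (2 * (m - k))) := by
      rw [← sum_neg_distrib]
      refine sum_congr rfl fun k _ => ?_
      rw [Nat.add_sub_add_right]
      ring
    rw [sum_range_succ', hshift, Nat.sub_zero]
    linear_combination -ih + (x ^ (2 * m + 1) + y ^ (2 * m + 1)) * h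

theorem Nat.fib_mul_fib_le_fib_add (a b : ℕ) : fib a * fib b ≤ fib (a + b) := by
  cases a with
  | zero => simp
  | succ a =>
    rw [Nat.add_right_comm, fib_add]
    calc fib (a + 1) * fib b ≤ fib (a + 1) * fib (b + 1) := Nat.mul_le_mul_left _ fib_le_fib_succ
      _ ≤ _ := Nat.le_add_left _ _

theorem Nat.tendsto_fib_atTop : Tendsto fib atTop atTop :=
  tendsto_atTop_mono' atTop (eventually_atTop.2 ⟨5, fun _ hn => le_fib_self hn⟩) tendsto_id

theorem tendsto_fib_div_fib_mul {k : ℕ} (hk : 2 ≤ k) :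
    Tendsto (fun c => (Nat.fib c : ℝ) / Nat.fib (k * c)) atTop (𝓝 0) := by
  have hbound : ∀ᶠ c in atTop, (Nat.fib c : ℝ) / Nat.fib (k * c) ≤ 1 / Nat.fib c := by
    filter_upwards [eventually_ge_atTop 1] with c hc
    have hsq : Nat.fib c * Nat.fib c ≤ Nat.fib (k * c) :=
      (Nat.fib_mul_fib_le_fib_add c c).trans (Nat.fib_mono (by nlinarith))
    have hpos : (0 : ℝ) < Nat.fib c := by exact_mod_cast Nat.fib_pos.2 hc
    rw [div_le_div_iff₀ (hpos.trans_le (by exact_mod_cast Nat.fib_mono (by nlinarith))) hpos]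
    exact_mod_cast (by simpa using hsq)
  refine squeeze_zero' (Eventually.of_forall fun c => by positivity) hbound ?_
  simp_rw [one_div]
  exact tendsto_inv_atTop_zero.comp (tendsto_natCast_atTop_atTop.comp Nat.tendsto_fib_atTop)

theorem lucas_succ (n : ℕ) : lucas (n + 1) = Nat.fib n + Nat.fib (n + 2) := by
  induction n using Nat.twoStepInduction with
  | zero => rfl
  | one => rfl
  | more n ih1 ih2 =>
    rw [lucas, ih1, ih2]
    simp only [Nat.fib_add_two]
    ring

theorem lucas_pos (n : ℕ) : 0 < lucas n := by
  cases n with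
  | zero => decide
  | succ n => rw [lucas_succ]; exact Nat.add_pos_right _ (Nat.fib_pos.2 (by omega))

theorem lucas_le_lucas_mul {k : ℕ} (hk : 0 < k) (c : ℕ) : lucas c ≤ lucas (k * c) := by
  cases c with
  | zero => simp
  | succ c =>
    obtain ⟨j, hj⟩ : ∃ j, k * (c + 1) = j + 1 := Nat.exists_eq_add_one.2 (by positivity)
    have hcj : c ≤ j := by nlinarith
    rw [hj, lucas_succ, lucas_succ]
    exact Nat.add_le_add (Nat.fib_mono hcj) (Nat.fib_mono (by omega))

theorem coe_lucas_eq (n : ℕ) : (lucas n : ℝ) = φ ^ n + ψ ^ n := by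
  induction n using Nat.twoStepInduction with
  | zero => norm_num [lucas]
  | one => simp [lucas, Real.goldenRatio_add_goldenConj]
  | more n ih1 ih2 =>
    rw [lucas, Nat.cast_add, ih1, ih2]
    linear_combination -φ ^ n * Real.goldenRatio_sq - ψ ^ n * Real.goldenConj_sq

theorem fib_two_mul_eq_fib_mul_lucas (n : ℕ) : Nat.fib (2 * n) = Nat.fib n * lucas n := by
  have h : (Nat.fib (2 * n) : ℝ) = Nat.fib n * lucas n := by
    rw [Real.coe_fib_eq, Real.coe_fib_eq, coe_lucas_eq, two_mul, pow_add, pow_add]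
    ring
  exact_mod_cast h

theorem lucas_mul_alternating_lucas_sum {c : ℕ} (hc : Even c) (m : ℕ) :
    (lucas c : ℝ) * ((-1) ^ m + ∑ k ∈ range m, (-1) ^ k * (lucas ((m - k) * (2 * c)) : ℝ)) =
      lucas ((2 * m + 1) * c) := by
  have hxy : φ ^ c * ψ ^ c = 1 := by
    rw [← mul_pow, Real.goldenRatio_mul_goldenConj, hc.neg_one_pow]
  have hexp : ∀ j, j * (2 * c) = c * (2 * j) := fun j => by ring
  simp only [coe_lucas_eq, hexp, mul_comm (2 * m + 1) c, pow_mul φ c, pow_mul ψ c]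
  exact add_mul_alternating_sum_pow hxy m

theorem fib_two_mul_mul_alternating_lucas_sum_div {c : ℕ} (hc : Even c) (hc0 : 0 < c) (m : ℕ) :
    (Nat.fib (2 * c) : ℝ) *
        ((-1) ^ m - 1 + ∑ k ∈ range m, (-1) ^ k * (lucas ((m - k) * (2 * c)) : ℝ)) /
        Nat.fib ((2 * m + 1) * (2 * c)) =
      Nat.fib c / Nat.fib ((2 * m + 1) * c) -
        Nat.fib (2 * c) / Nat.fib ((2 * m + 1) * (2 * c)) := by
  have hL := lucas_mul_alternating_lucas_sum hc m
  have hF : (Nat.fib ((2 * m + 1) * c) : ℝ) ≠ 0 := by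
    exact_mod_cast (Nat.fib_pos.2 (by positivity)).ne'
  have hLc : (lucas c : ℝ) ≠ 0 := by exact_mod_cast (lucas_pos c).ne'
  have hLK : (lucas ((2 * m + 1) * c) : ℝ) ≠ 0 := by exact_mod_cast (lucas_pos _).ne'
  rw [mul_left_comm, fib_two_mul_eq_fib_mul_lucas, fib_two_mul_eq_fib_mul_lucas]
  push_cast
  field_simp
  linear_combination (Nat.fib c : ℝ) * hL

theorem fib_two_mul_div_fib_mul_le {k : ℕ} (hk : 0 < k) (c : ℕ) :
    (Nat.fib (2 * c) : ℝ) / Nat.fib (k * (2 * c)) ≤ Nat.fib c / Nat.fib (k * c) := by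
  rw [mul_left_comm, fib_two_mul_eq_fib_mul_lucas, fib_two_mul_eq_fib_mul_lucas]
  push_cast
  rw [mul_div_mul_comm]
  refine mul_le_of_le_one_right (by positivity) (div_le_one_of_le₀ ?_ (by positivity))
  exact_mod_cast lucas_le_lucas_mul hk c

theorem stmt16 (m : ℕ) (hm : 0 < m) :
    HasSum
      (fun n : ℕ =>
        (Nat.fib (2 ^ (n + 2)) : ℝ) *
          ((-1 : ℝ) ^ m - 1 +
            ∑ k ∈ Finset.range m, (-1 : ℝ) ^ k * (lucas ((m - k) * 2 ^ (n + 2)) : ℝ)) /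
          (Nat.fib ((2 * m + 1) * 2 ^ (n + 2)) : ℝ))
      (1 / ((Nat.fib (2 * m + 1) : ℝ) * (lucas (2 * m + 1) : ℝ))) := by
  set d : ℕ → ℝ := fun n => Nat.fib (2 ^ (n + 1)) / Nat.fib ((2 * m + 1) * 2 ^ (n + 1))
  have hpow : ∀ n, 2 ^ (n + 2) = 2 * 2 ^ (n + 1) := fun n => pow_succ' 2 (n + 1)
  have hanti : Antitone d := antitone_nat_of_succ_le fun n => by
    simpa only [d, hpow] using fib_two_mul_div_fib_mul_le (2 * m).succ_pos (2 ^ (n + 1))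
  have hlim : Tendsto d atTop (𝓝 0) :=
    (tendsto_fib_div_fib_mul (by omega)).comp
      ((tendsto_pow_atTop_atTop_of_one_lt one_lt_two).comp (tendsto_add_atTop_nat 1))
  have hd0 : d 0 = 1 / ((Nat.fib (2 * m + 1) : ℝ) * (lucas (2 * m + 1) : ℝ)) := by
    simp only [d, zero_add, pow_one, mul_comm _ 2, fib_two_mul_eq_fib_mul_lucas]
    norm_num
  convert hasSum_sub_succ_of_antitone hanti hlim using 1
  · funext n
    simp only [d, hpow]
    exact fib_two_mul_mul_alternating_lucas_sum_div ⟨2 ^ n, by ring⟩ (by positivity) m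
  · rw [hd0, sub_zero]
end
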